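/- For k ∈ ℕ with k ≥ 1, define p_k = 3k − 1 and M_k = {i·p_k + j : i ∈ ℕ₀, k ≤ j ≤ 2k−1} ⊆ ℕ₀. Then the one-dimensional misère subtraction game M_k is reflexive: P(M_k) = M_k. -/
import Mathlib


/-- `x` is a terminal position of the subtraction game with move set `M`:
no move `m ∈ M` satisfies `m ≤ x`. -/
def Terminal {α : Type*} [PartialOrder α] [Sub α] (M : Set α) (x : α) : Prop :=
  ∀ m ∈ M, ¬ m ≤ x

/-- The set of terminal positions `T_M`. -/
def Tset {α : Type*} [PartialOrder α] [Sub α] (M : Set α) : Set α :=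
  {x | Terminal M x}

/-- Misère-play P-positions of a vector subtraction game, by well-founded recursion:
`x` is a P-position iff it has at least one option, and every option `x - m` is an
N-position, i.e. is terminal or has an option `x - m - m'` that is a P-position.
(The guard `x - m - m' < x` is automatic when `0 ∉ M`; when `0 ∈ M` the game is drawn
everywhere and this definition correctly yields no P-positions.) -/
def IsP {α : Type*} [PartialOrder α] [Sub α] [WellFoundedLT α] (M : Set α) : α → Prop :=
  (wellFounded_lt (α := α)).fix fun x rec =>
    (∃ m ∈ M, m ≤ x) ∧ ∀ m ∈ M, m ≤ x →
      (Terminal M (x - m) ∨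
        ∃ m' ∈ M, m' ≤ x - m ∧ ∃ h : x - m - m' < x, rec (x - m - m') h)

/-- The set of misère P-positions (this is also the `★`-operator `M ↦ M★`). -/
def Pset {α : Type*} [PartialOrder α] [Sub α] [WellFoundedLT α] (M : Set α) : Set α :=
  {x | IsP M x}

/-- `x` is a misère N-position: terminal, or has an option that is a P-position. -/
def IsN {α : Type*} [PartialOrder α] [Sub α] [WellFoundedLT α] (M : Set α) (x : α) : Prop :=
  Terminal M x ∨ ∃ m ∈ M, m ≤ x ∧ IsP M (x - m)

/-- The set of misère N-positions. -/
def Nset {α : Type*} [PartialOrder α] [Sub α] [WellFoundedLT α] (M : Set α) : Set α :=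
  {x | IsN M x}

/-- The set of minimal elements of `M`. -/
def minSet {α : Type*} [PartialOrder α] (M : Set α) : Set α :=
  {m ∈ M | ∀ m' ∈ M, m' ≤ m → m' = m}

/-- Pointwise convergence of the iterates of the `★`-operator to the set `L`. -/
def LimitsTo {α : Type*} [PartialOrder α] [Sub α] [WellFoundedLT α] (M L : Set α) : Prop :=
  ∀ x : α, ∃ N : ℕ, ∀ i ≥ N, (x ∈ Pset^[i] M ↔ x ∈ L)

/-- The one-dimensional reflexive games `M_k` (with `M_0 = ∅`). -/
def Mk (k : ℕ) : Set ℕ :=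
  {n | 1 ≤ k ∧ ∃ i j : ℕ, k ≤ j ∧ j ≤ 2 * k - 1 ∧ n = i * (3 * k - 1) + j}

section Aux
variable {k : ℕ}

lemma isP_iff {α : Type*} [PartialOrder α] [Sub α] [WellFoundedLT α] (M : Set α) (x : α) :
    IsP M x ↔ (∃ m ∈ M, m ≤ x) ∧ ∀ m ∈ M, m ≤ x →
      (Terminal M (x - m) ∨
        ∃ m' ∈ M, m' ≤ x - m ∧ ∃ _ : x - m - m' < x, IsP M (x - m - m')) := by
  rw [IsP, WellFounded.fix_eq]

lemma mem_Mk (hk : 1 ≤ k) {n : ℕ} :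
    n ∈ Mk k ↔ k ≤ n % (3 * k - 1) ∧ n % (3 * k - 1) ≤ 2 * k - 1 := by
  constructor
  · rintro ⟨-, i, j, hj1, hj2, rfl⟩
    have : (i * (3 * k - 1) + j) % (3 * k - 1) = j := by
      rw [Nat.add_comm, Nat.add_mul_mod_self_right]
      exact Nat.mod_eq_of_lt (by omega)
    omega
  · rintro ⟨h1, h2⟩
    exact ⟨hk, n / (3 * k - 1), n % (3 * k - 1), h1, h2,
      (Nat.div_add_mod' n (3 * k - 1)).symm⟩

lemma Mk_le (hk : 1 ≤ k) {m : ℕ} (hm : m ∈ Mk k) : k ≤ m := by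
  have := (mem_Mk hk).1 hm
  have := Nat.mod_le m (3 * k - 1)
  omega

lemma k_mem_Mk (hk : 1 ≤ k) : k ∈ Mk k := by
  rw [mem_Mk hk, Nat.mod_eq_of_lt (by omega)]
  omega

/-- lemma B: a move from an `Mk` position leaves `Mk`. -/
lemma moveOut (hk : 1 ≤ k) {a b : ℕ} (ha : a ∈ Mk k) (hb : b ∈ Mk k) (hba : b ≤ a) :
    a - b ∉ Mk k := by
  intro hc
  rw [mem_Mk hk] at ha hb hc
  have hap : a % (3 * k - 1) < 3 * k - 1 := Nat.mod_lt _ (by omega)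
  have hmod : a % (3 * k - 1) = (b % (3 * k - 1) + (a - b) % (3 * k - 1)) % (3 * k - 1) := by
    conv_lhs => rw [show a = b + (a - b) by omega]
    rw [Nat.add_mod]
  rcases lt_or_ge (b % (3 * k - 1) + (a - b) % (3 * k - 1)) (3 * k - 1) with h | h
  · rw [Nat.mod_eq_of_lt h] at hmod; omega
  · rw [Nat.mod_eq_sub_mod h, Nat.mod_eq_of_lt
      (show b % (3 * k - 1) + (a - b) % (3 * k - 1) - (3 * k - 1) < 3 * k - 1 by omega)] at hmod
    omega

/-- lemma A: from a non-terminal non-`Mk` position there is a move into `Mk`. -/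
lemma moveIn (hk : 1 ≤ k) {z : ℕ} (hz : z ∉ Mk k) (hzk : k ≤ z) :
    ∃ m ∈ Mk k, m ≤ z ∧ z - m ∈ Mk k := by
  have hzd : z / (3 * k - 1) * (3 * k - 1) + z % (3 * k - 1) = z := Nat.div_add_mod' z _
  have htp : z % (3 * k - 1) < 3 * k - 1 := Nat.mod_lt _ (by omega)
  rw [mem_Mk hk] at hz
  push_neg at hz
  rcases lt_or_ge (z % (3 * k - 1)) k with h | h
  · -- residue < k : take m = residue + k, new residue 2k-1
    have hq1 : 1 ≤ z / (3 * k - 1) := by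
      rcases Nat.eq_zero_or_pos (z / (3 * k - 1)) with h0 | h0
      · rw [h0] at hzd; omega
      · exact h0
    have hqp : 3 * k - 1 ≤ z / (3 * k - 1) * (3 * k - 1) :=
      Nat.le_mul_of_pos_left _ hq1
    refine ⟨z % (3 * k - 1) + k, ?_, by omega, ?_⟩
    · rw [mem_Mk hk, Nat.mod_eq_of_lt (by omega)]; omega
    · refine ⟨hk, z / (3 * k - 1) - 1, 2 * k - 1, by omega, le_refl _, ?_⟩
      have hsub : (z / (3 * k - 1) - 1) * (3 * k - 1)
          = z / (3 * k - 1) * (3 * k - 1) - 1 * (3 * k - 1) := Nat.sub_mul _ _ _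
      rw [hsub, one_mul]
      omega
  · -- residue ≥ 2k : take m = residue - k, new residue k
    have h2 : 2 * k ≤ z % (3 * k - 1) := by omega
    have hmle : z % (3 * k - 1) ≤ z := Nat.mod_le z _
    refine ⟨z % (3 * k - 1) - k, ?_, by omega, ?_⟩
    · rw [mem_Mk hk, Nat.mod_eq_of_lt (by omega)]; omega
    · exact ⟨hk, z / (3 * k - 1), k, le_refl _, by omega, by omega⟩

lemma key (hk : 1 ≤ k) : ∀ x : ℕ, IsP (Mk k) x ↔ x ∈ Mk k := by
  intro x
  induction x using Nat.strong_induction_on with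
  | _ x ih =>
    constructor
    · intro hP
      by_contra hx
      rw [isP_iff] at hP
      obtain ⟨⟨m0, hm0, hm0x⟩, hall⟩ := hP
      have hxk : k ≤ x := le_trans (Mk_le hk hm0) hm0x
      obtain ⟨m, hmM, hmx, hy⟩ := moveIn hk hx hxk
      rcases hall m hmM hmx with hterm | ⟨m', hm', hm'y, hlt, hPz⟩
      · exact hterm k (k_mem_Mk hk) (Mk_le hk hy)
      · exact moveOut hk hy hm' hm'y ((ih _ hlt).1 hPz)
    · intro hx
      rw [isP_iff]
      have hxk : k ≤ x := Mk_le hk hx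
      refine ⟨⟨k, k_mem_Mk hk, hxk⟩, ?_⟩
      intro m hm hmx
      have hy : x - m ∉ Mk k := moveOut hk hx hm hmx
      by_cases hterm : Terminal (Mk k) (x - m)
      · exact Or.inl hterm
      · right
        have hyk : k ≤ x - m := by
          rw [Terminal] at hterm
          push_neg at hterm
          obtain ⟨m'', hm'', hle⟩ := hterm
          exact le_trans (Mk_le hk hm'') hle
        obtain ⟨m', hm', hm'y, hz⟩ := moveIn hk hy hyk
        have hmk : k ≤ m := Mk_le hk hm
        have hm'k : k ≤ m' := Mk_le hk hm'
        have hlt : x - m - m' < x := by omega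
        exact ⟨m', hm', hm'y, hlt, (ih _ hlt).2 hz⟩

end Aux

theorem Mk_reflexive (k : ℕ) (hk : 1 ≤ k) : Pset (Mk k) = Mk k := by
  ext x
  exact key hk x
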